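/- Let n ∈ ℕ and let Ω be an open, nonempty, proper subset of ℝⁿ whose boundary ∂Ω is an Ahlfors regular set; set σ := ℋ^{n−1} restricted to ∂Ω. Then for each p ∈ (0,∞) and κ ∈ (0,∞) there exists a constant C ∈ (0,∞), depending only on n, κ, p, and the Ahlfors regularity constants of ∂Ω, such that for every ε with 0 < ε < ε_{Ω,κ} := diam(∂Ω)/(n(2+√n)(3+2κ)) (interpreted as +∞ when ∂Ω is unbounded) and every Lebesgue-measurable function u : Ω → ℂ one has (∫_{O_ε} |u|^p dℒⁿ)^{1/p} ≤ C · ε^{1/p} · ‖N^ε_κ u‖_{L^p(∂Ω,σ)}. -/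

import Mathlib

open MeasureTheory Metric Set Filter
open scoped ENNReal NNReal Topology

noncomputable section

abbrev Euc (n : ℕ) : Type := EuclideanSpace ℝ (Fin n)

variable {n : ℕ}

/-- The nontangential approach region `Γ_κ(x)` to `∂Ω` from within `Ω`. -/
def ntRegion (Ω : Set (Euc n)) (κ : ℝ) (x : Euc n) : Set (Euc n) :=
  {y | y ∈ Ω ∧ dist x y < (1 + κ) * infDist y (frontier Ω)}

/-- The one-sided collar neighborhood `O_ε` of `∂Ω`. -/
def collar (Ω : Set (Euc n)) (ε : ℝ) : Set (Euc n) :=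
  {y | y ∈ Ω ∧ infDist y (frontier Ω) < ε}

/-- Nontangential maximal function of `u` restricted to a set `S` (truncated version). -/
def ntMaxOn {E : Type*} [NormedAddCommGroup E] (Ω S : Set (Euc n)) (κ : ℝ)
    (u : Euc n → E) (x : Euc n) : ℝ≥0∞ :=
  essSup (fun y => (‖u y‖₊ : ℝ≥0∞)) (volume.restrict (ntRegion Ω κ x ∩ S))

/-- Nontangential maximal function `N_κ u`. -/
def ntMax {E : Type*} [NormedAddCommGroup E] (Ω : Set (Euc n)) (κ : ℝ)
    (u : Euc n → E) (x : Euc n) : ℝ≥0∞ :=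
  essSup (fun y => (‖u y‖₊ : ℝ≥0∞)) (volume.restrict (ntRegion Ω κ x))

/-- `u` has κ-nontangential trace `v` at the boundary point `x`. -/
def HasNTTrace {E : Type*} [NormedAddCommGroup E] (Ω : Set (Euc n)) (κ : ℝ)
    (u : Euc n → E) (x : Euc n) (v : E) : Prop :=
  x ∈ closure (ntRegion Ω κ x) ∧
  ∃ N : Set (Euc n), N ⊆ ntRegion Ω κ x ∧ volume N = 0 ∧
    Tendsto u (nhdsWithin x (ntRegion Ω κ x \ N)) (nhds v)

/-- `Sig` is an Ahlfors regular set (of dimension `n-1`) with constant `C`. -/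
def AhlforsRegularWith (n : ℕ) (Sig : Set (Euc n)) (C : ℝ) : Prop :=
  1 < C ∧ IsClosed Sig ∧ ∀ x ∈ Sig, ∀ r : ℝ, 0 < r →
    ENNReal.ofReal r < 2 * EMetric.diam Sig →
    ENNReal.ofReal (C⁻¹ * r ^ (n - 1)) ≤ μH[(n : ℝ) - 1] (Sig ∩ ball x r) ∧
      μH[(n : ℝ) - 1] (Sig ∩ ball x r) ≤ ENNReal.ofReal (C * r ^ (n - 1))

/-- The measure-theoretic (geometric measure theoretic) boundary `∂*Ω`. -/
def mtBoundary (n : ℕ) (Ω : Set (Euc n)) : Set (Euc n) :=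
  {x | 0 < limsup (fun r : ℝ => volume (Ω ∩ ball x r) / ENNReal.ofReal (r ^ n)) (𝓝[>] 0) ∧
       0 < limsup (fun r : ℝ => volume (Ωᶜ ∩ ball x r) / ENNReal.ofReal (r ^ n)) (𝓝[>] 0)}

/-- The nontangentially accessible boundary `∂_nta Ω`. -/
def ntaBoundary (n : ℕ) (Ω : Set (Euc n)) : Set (Euc n) :=
  {x | x ∈ frontier Ω ∧ ∀ κ : ℝ, 0 < κ → x ∈ closure (ntRegion Ω κ x)}

/-- The Laplacian `Δu = ∑ ∂²u/∂x_j²`, via iterated Fréchet derivatives. -/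
def laplacian (u : Euc n → ℝ) (x : Euc n) : ℝ :=
  ∑ i : Fin n, fderiv ℝ (fun z => fderiv ℝ u z (EuclideanSpace.single i 1)) x
    (EuclideanSpace.single i 1)

/-- `u` is harmonic on the open set `Ω`. -/
def HarmonicOn' (u : Euc n → ℝ) (Ω : Set (Euc n)) : Prop :=
  ContDiffOn ℝ 2 u Ω ∧ ∀ x ∈ Ω, laplacian u x = 0

/-- `w` is (continuous and) subharmonic on the open set `Ω`, via the sub-mean value property. -/
def SubharmonicOn (w : Euc n → ℝ) (Ω : Set (Euc n)) : Prop :=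
  ContinuousOn w Ω ∧ ∀ x ∈ Ω, ∀ r : ℝ, 0 < r → closedBall x r ⊆ Ω →
    w x ≤ ⨍ y in ball x r, w y

/-- `Sig` is a uniformly rectifiable (UR) set: closed, Ahlfors regular, with
Big Pieces of Lipschitz Images. -/
def IsURSet (n : ℕ) (Sig : Set (Euc n)) : Prop :=
  IsClosed Sig ∧ (∃ C : ℝ, AhlforsRegularWith n Sig C) ∧
  ∃ ε : ℝ, 0 < ε ∧ ∃ M₀ : ℝ≥0, ∀ x ∈ Sig, ∀ r : ℝ, 0 < r →
    ENNReal.ofReal r < EMetric.diam Sig →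
    ∃ Φ : EuclideanSpace ℝ (Fin (n - 1)) → Euc n, LipschitzWith M₀ Φ ∧
      ENNReal.ofReal (ε * r ^ (n - 1)) ≤
        μH[(n : ℝ) - 1] (Sig ∩ ball x r ∩ Φ '' ball (0 : EuclideanSpace ℝ (Fin (n - 1))) r)

end

/-!
For `y` in the collar at distance `d` from `∂Ω`, pick a nearest boundary point `z`. Every
`x ∈ ∂Ω ∩ B(z, κd/2)` has `y ∈ Γ_κ(x)`, so `|u(y)| ≤ N(x)` for a.e. such `y`, and the lower Ahlfors
bound `σ(B(z, κd/2)) ≳ d^{n-1}` yields `|u(y)|^p ≲ d^{1-n} ∫_{B(y,(1+κ/2)d)} N^p dσ`. Integrating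
over the collar and exchanging the integrals, it remains to bound, for fixed `x`, the integral of
`d(y)^{1-n}` over the collar points with `|x - y| < (1+κ/2) d(y)`: on the dyadic shell
`d ≈ ε 2^{-k}` this set lies in a ball of radius `≈ ε 2^{-k}`, so the shell contributes
`≈ ε 2^{-k}`, and the sum is `≲ ε`.
-/

namespace MeasureTheory

open Module

variable {α β : Type*} [MeasurableSpace α] [MeasurableSpace β]

theorem essSup_restrict_iUnion_le {ι : Type*} [Countable ι] (μ : Measure α) (s : ι → Set α)
    (f : α → ℝ≥0∞) :
    essSup f (μ.restrict (⋃ i, s i)) ≤ ⨆ i, essSup f (μ.restrict (s i)) := by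
  refine essSup_le_of_ae_le _ ((ae_restrict_iUnion_iff s _).2 fun i => ?_)
  exact (ae_le_essSup (f := f)).mono fun y hy =>
    hy.trans (le_iSup (fun i => essSup f (μ.restrict (s i))) i)

theorem ae_le_essSup_restrict_of_isOpen [TopologicalSpace α] [SecondCountableTopology α]
    [OpensMeasurableSpace α] (μ : Measure α) (f : α → ℝ≥0∞) :
    ∀ᵐ y ∂μ, ∀ s, IsOpen s → y ∈ s → f y ≤ essSup f (μ.restrict s) := by
  have hbasis : ∀ᵐ y ∂μ, ∀ b ∈ TopologicalSpace.countableBasis α,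
      y ∈ b → f y ≤ essSup f (μ.restrict b) :=
    (ae_ball_iff (TopologicalSpace.countable_countableBasis α)).2 fun b hb =>
      (ae_restrict_iff' (TopologicalSpace.isOpen_of_mem_countableBasis hb).measurableSet).1
        ae_le_essSup
  filter_upwards [hbasis] with y hy s hs hys
  obtain ⟨b, hb, hyb, hbs⟩ :=
    (TopologicalSpace.isBasis_countableBasis α).exists_subset_of_mem_open hys hs
  exact (hy b hb hyb).trans (essSup_mono_measure' (Measure.restrict_mono hbs le_rfl))

theorem lowerSemicontinuous_essSup_restrict_dist_lt [PseudoMetricSpace α] (μ : Measure α)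
    (f : α → ℝ≥0∞) (A : Set α) (φ : α → ℝ) :
    LowerSemicontinuous fun x => essSup f (μ.restrict {y | y ∈ A ∧ dist x y < φ y}) := by
  intro x a ha
  set U : ℕ → Set α := fun i => {y | y ∈ A ∧ dist x y + 1 / (i + 1) < φ y}
  have hcover : {y | y ∈ A ∧ dist x y < φ y} ⊆ ⋃ i, U i := fun y ⟨hyA, hy⟩ => by
    obtain ⟨i, hi⟩ := exists_nat_one_div_lt (sub_pos.2 hy)
    exact mem_iUnion.2 ⟨i, hyA, by linarith⟩
  have : a < ⨆ i, essSup f (μ.restrict (U i)) :=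
    ha.trans_le ((essSup_mono_measure' (Measure.restrict_mono hcover le_rfl)).trans
      (essSup_restrict_iUnion_le μ U f))
  obtain ⟨i, hi⟩ := lt_iSup_iff.1 this
  filter_upwards [ball_mem_nhds x (Nat.one_div_pos_of_nat (n := i))] with x' hx'
  refine hi.trans_le (essSup_mono_measure' (Measure.restrict_mono ?_ le_rfl))
  rintro y ⟨hyA, hy⟩
  refine ⟨hyA, ?_⟩
  have := dist_triangle x' x y
  rw [mem_ball] at hx'
  linarith

theorem lintegral_le_mul_lintegral_of_le_setLIntegral {μ : Measure α} {ν : Measure β}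
    [SFinite μ] [SFinite ν] {T : Set (α × β)} (hT : MeasurableSet T) {w g : α → ℝ≥0∞}
    {h : β → ℝ≥0∞} (hw : Measurable w) (hh : Measurable h) {B : ℝ≥0∞}
    (hg : ∀ᵐ y ∂μ, g y ≤ w y * ∫⁻ x in {x | (y, x) ∈ T}, h x ∂ν)
    (hB : ∀ x, ∫⁻ y in {y | (y, x) ∈ T}, w y ∂μ ≤ B) :
    ∫⁻ y, g y ∂μ ≤ B * ∫⁻ x, h x ∂ν := by
  set F : α × β → ℝ≥0∞ := T.indicator fun q => w q.1 * h q.2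
  have hF : Measurable F := ((hw.comp measurable_fst).mul (hh.comp measurable_snd)).indicator hT
  calc ∫⁻ y, g y ∂μ ≤ ∫⁻ y, ∫⁻ x, F (y, x) ∂ν ∂μ := by
        refine lintegral_mono_ae (hg.mono fun y hy => hy.trans_eq ?_)
        rw [← lintegral_const_mul _ hh]
        exact (lintegral_indicator (measurable_prodMk_left hT) _).symm
    _ = ∫⁻ x, ∫⁻ y, F (y, x) ∂μ ∂ν := lintegral_lintegral_swap hF.aemeasurable
    _ = ∫⁻ x, (∫⁻ y in {y | (y, x) ∈ T}, w y ∂μ) * h x ∂ν := by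
        refine lintegral_congr fun x => ?_
        rw [← lintegral_mul_const _ hw]
        exact lintegral_indicator (measurable_prodMk_right hT) _
    _ ≤ ∫⁻ x, B * h x ∂ν := lintegral_mono fun x => mul_le_mul_left (hB x) _
    _ = B * ∫⁻ x, h x ∂ν := lintegral_const_mul _ hh

theorem setLIntegral_cone_inv_pow_le {E : Type*} [NormedAddCommGroup E] [NormedSpace ℝ E]
    [FiniteDimensional ℝ E] [MeasurableSpace E] [BorelSpace E] (μ : Measure E)
    [μ.IsAddHaarMeasure] {m : ℕ} (hE : finrank ℝ E = m + 1) (d : E → ℝ) {c t ε : ℝ}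
    (hc : 0 < c) (ht : 0 < t) (hε : 0 < ε) (x : E) :
    ∫⁻ y in {y | 0 < d y ∧ d y < ε ∧ dist x y < t * d y}, (ENNReal.ofReal (c * d y ^ m))⁻¹ ∂μ ≤
      2 * ENNReal.ofReal (2 ^ m * t ^ (m + 1) / c) * μ (ball 0 1) * ENNReal.ofReal ε := by
  set A := 2 ^ m * t ^ (m + 1) / c * ε
  set shell : ℕ → Set E := fun k =>
    {y | ε / 2 ^ (k + 1) < d y ∧ d y ≤ ε / 2 ^ k ∧ dist x y < t * d y}
  have hcover : {y | 0 < d y ∧ d y < ε ∧ dist x y < t * d y} ⊆ ⋃ k, shell k := by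
    rintro y ⟨hd0, hdε, hy⟩
    obtain ⟨k, hk, hk'⟩ := exists_nat_pow_near ((one_le_div hd0).2 hdε.le) one_lt_two
    refine mem_iUnion.2 ⟨k, ?_, ?_, hy⟩
    · rwa [div_lt_iff₀ (by positivity), ← div_lt_iff₀' hd0]
    · rwa [le_div_iff₀ (by positivity), ← le_div_iff₀' hd0]
  have hshell : ∀ k : ℕ, ∫⁻ y in shell k, (ENNReal.ofReal (c * d y ^ m))⁻¹ ∂μ ≤
      ENNReal.ofReal A * 2⁻¹ ^ k * μ (ball 0 1) := by
    intro k
    calc ∫⁻ y in shell k, (ENNReal.ofReal (c * d y ^ m))⁻¹ ∂μ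
        ≤ ∫⁻ _ in shell k, (ENNReal.ofReal (c * (ε / 2 ^ (k + 1)) ^ m))⁻¹ ∂μ := by
          refine setLIntegral_mono measurable_const fun y hy => ?_
          gcongr
          exact hy.1.le
      _ ≤ (ENNReal.ofReal (c * (ε / 2 ^ (k + 1)) ^ m))⁻¹ * μ (ball x (t * (ε / 2 ^ k))) := by
          rw [setLIntegral_const]
          gcongr
          rintro y ⟨-, hy, hxy⟩
          rw [mem_ball_comm]
          calc dist x y < t * d y := hxy
            _ ≤ t * (ε / 2 ^ k) := by gcongr
      _ = ENNReal.ofReal A * 2⁻¹ ^ k * μ (ball 0 1) := by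
          have hA : (c * (ε / 2 ^ (k + 1)) ^ m)⁻¹ * (t * (ε / 2 ^ k)) ^ (m + 1) = A * 2⁻¹ ^ k := by
            simp only [A, mul_pow, div_pow, pow_succ, inv_pow]
            field_simp
          rw [Measure.addHaar_ball_of_pos μ x (by positivity), hE, ← mul_assoc,
            ← ENNReal.ofReal_inv_of_pos (by positivity), ← ENNReal.ofReal_mul (by positivity), hA,
            ENNReal.ofReal_mul (by positivity), ENNReal.ofReal_pow (by norm_num),
            ENNReal.ofReal_inv_of_pos two_pos, ENNReal.ofReal_ofNat]
  calc ∫⁻ y in {y | 0 < d y ∧ d y < ε ∧ dist x y < t * d y}, (ENNReal.ofReal (c * d y ^ m))⁻¹ ∂μ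
      ≤ ∫⁻ y in ⋃ k, shell k, (ENNReal.ofReal (c * d y ^ m))⁻¹ ∂μ := lintegral_mono_set hcover
    _ ≤ ∑' k, ∫⁻ y in shell k, (ENNReal.ofReal (c * d y ^ m))⁻¹ ∂μ := lintegral_iUnion_le _ _
    _ ≤ ∑' k : ℕ, ENNReal.ofReal A * 2⁻¹ ^ k * μ (ball 0 1) := ENNReal.tsum_le_tsum hshell
    _ = 2 * ENNReal.ofReal (2 ^ m * t ^ (m + 1) / c) * μ (ball 0 1) * ENNReal.ofReal ε := by
        rw [ENNReal.tsum_mul_right, ENNReal.tsum_mul_left, ENNReal.tsum_geometric,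
          ENNReal.one_sub_inv_two, inv_inv, ENNReal.ofReal_mul (by positivity)]
        ring

end MeasureTheory

section Collar

variable {n : ℕ} {E : Type*} [NormedAddCommGroup E]

theorem isOpen_ntRegion {Ω : Set (Euc n)} (hΩ : IsOpen Ω) (κ : ℝ) (x : Euc n) :
    IsOpen (ntRegion Ω κ x) :=
  hΩ.inter (isOpen_lt (continuous_const.dist continuous_id)
    (continuous_const.mul (continuous_infDist_pt _)))

theorem isOpen_collar {Ω : Set (Euc n)} (hΩ : IsOpen Ω) (ε : ℝ) : IsOpen (collar Ω ε) :=
  hΩ.inter (isOpen_lt (continuous_infDist_pt _) continuous_const)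

theorem lowerSemicontinuous_ntMaxOn (Ω S : Set (Euc n)) (κ : ℝ) (u : Euc n → E) :
    LowerSemicontinuous (ntMaxOn Ω S κ u) := by
  have hset : ∀ x, ntRegion Ω κ x ∩ S =
      {y | y ∈ Ω ∩ S ∧ dist x y < (1 + κ) * infDist y (frontier Ω)} := fun x => by
    ext y
    simp only [ntRegion, mem_inter_iff, mem_ofPred_eq]
    tauto
  have := lowerSemicontinuous_essSup_restrict_dist_lt volume (fun y => (‖u y‖₊ : ℝ≥0∞)) (Ω ∩ S)
    fun y => (1 + κ) * infDist y (frontier Ω)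
  simp only [← hset] at this
  exact this

theorem infDist_frontier_pos {Ω : Set (Euc n)} (hΩ : IsOpen Ω) (hF : (frontier Ω).Nonempty)
    {y : Euc n} (hy : y ∈ Ω) : 0 < infDist y (frontier Ω) :=
  (isClosed_frontier.notMem_iff_infDist_pos hF).1 fun hyF =>
    (hΩ.inter_frontier_eq.subset ⟨hy, hyF⟩ : y ∈ (∅ : Set (Euc n)))

theorem isLocallyFiniteMeasure_restrict_of_ahlforsRegularWith {F : Set (Euc n)} {C : ℝ}
    (hAR : AhlforsRegularWith n F C) (hF : 0 < Metric.ediam F) :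
    IsLocallyFiniteMeasure ((μH[(n : ℝ) - 1]).restrict F) := by
  refine ⟨fun x => ?_⟩
  by_cases hx : x ∈ F
  · obtain ⟨r, -, hr0, hr⟩ := ENNReal.lt_iff_exists_real_btwn.1
      (ENNReal.mul_pos two_ne_zero hF.ne' : 0 < 2 * Metric.ediam F)
    rw [ENNReal.ofReal_pos] at hr0
    refine ⟨ball x r, ball_mem_nhds x hr0, ?_⟩
    rw [Measure.restrict_apply measurableSet_ball, inter_comm]
    exact (hAR.2.2 x hx r hr0 hr).2.trans_lt ENNReal.ofReal_lt_top
  · refine ⟨Fᶜ, hAR.2.1.isOpen_compl.mem_nhds hx, ?_⟩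
    simp [Measure.restrict_apply hAR.2.1.isOpen_compl.measurableSet]

theorem ae_ofReal_mul_rpow_le_setLIntegral_ntMaxOn {Ω S : Set (Euc n)} (hΩ : IsOpen Ω)
    (hS : IsOpen S) {C₀ κ p : ℝ} (hAR : AhlforsRegularWith n (frontier Ω) C₀)
    (hF : (frontier Ω).Nonempty) (hκ : 0 < κ) (hp : 0 ≤ p) (u : Euc n → E) :
    ∀ᵐ y, y ∈ Ω ∩ S →
      ENNReal.ofReal (κ / 2 * infDist y (frontier Ω)) < 2 * Metric.ediam (frontier Ω) →
      ENNReal.ofReal (C₀⁻¹ * (κ / 2 * infDist y (frontier Ω)) ^ (n - 1)) * ‖u y‖₊ ^ p ≤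
        ∫⁻ x in ball y ((1 + κ / 2) * infDist y (frontier Ω)), ntMaxOn Ω S κ u x ^ p
          ∂(μH[(n : ℝ) - 1]).restrict (frontier Ω) := by
  filter_upwards [ae_le_essSup_restrict_of_isOpen volume fun y => (‖u y‖₊ : ℝ≥0∞)]
    with y hy ⟨hyΩ, hyS⟩ hdiam
  set F := frontier Ω
  set σ := (μH[(n : ℝ) - 1]).restrict F
  set r := κ / 2 * infDist y F
  have hdy := infDist_frontier_pos hΩ hF hyΩ
  have hr : 0 < r := mul_pos (half_pos hκ) hdy
  obtain ⟨z, hzF, hz⟩ := isClosed_frontier.exists_infDist_eq_dist hF y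
  have hball : ball z r ⊆ ball y ((1 + κ / 2) * infDist y F) := fun x hx => by
    rw [mem_ball] at hx ⊢
    calc dist x y ≤ dist x z + dist z y := dist_triangle x z y
      _ < r + infDist y F := by rw [dist_comm z y, ← hz]; linarith
      _ = (1 + κ / 2) * infDist y F := by ring
  have hN : ∀ x ∈ ball z r, (‖u y‖₊ : ℝ≥0∞) ^ p ≤ ntMaxOn Ω S κ u x ^ p := fun x hx => by
    have hxy : dist x y < (1 + κ) * infDist y F :=
      (mem_ball.1 (hball hx)).trans (by gcongr; linarith)
    exact ENNReal.rpow_le_rpow (hy _ ((isOpen_ntRegion hΩ κ x).inter hS) ⟨⟨hyΩ, hxy⟩, hyS⟩) hp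
  calc ENNReal.ofReal (C₀⁻¹ * r ^ (n - 1)) * ‖u y‖₊ ^ p ≤ σ (ball z r) * ‖u y‖₊ ^ p := by
        gcongr
        rw [Measure.restrict_apply measurableSet_ball, inter_comm]
        exact (hAR.2.2 z hzF r hr hdiam).1
    _ = ∫⁻ _ in ball z r, (‖u y‖₊ : ℝ≥0∞) ^ p ∂σ := by rw [setLIntegral_const, mul_comm]
    _ ≤ ∫⁻ x in ball z r, ntMaxOn Ω S κ u x ^ p ∂σ := setLIntegral_mono' measurableSet_ball hN
    _ ≤ _ := lintegral_mono_set hball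

theorem lintegral_collar_rpow_le (hn : 1 ≤ n) {Ω : Set (Euc n)} (hΩ : IsOpen Ω) {C₀ κ p ε : ℝ}
    (hAR : AhlforsRegularWith n (frontier Ω) C₀) (hκ : 0 < κ) (hp : 0 ≤ p) (hε : 0 < ε)
    (hdiam : ENNReal.ofReal (κ / 2 * ε) ≤ 2 * Metric.ediam (frontier Ω)) (u : Euc n → E) :
    ∫⁻ y in collar Ω ε, (‖u y‖₊ : ℝ≥0∞) ^ p ≤
      2 * ENNReal.ofReal (2 ^ (n - 1) * (1 + κ / 2) ^ n / (C₀⁻¹ * (κ / 2) ^ (n - 1))) *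
        volume (ball (0 : Euc n) 1) * ENNReal.ofReal ε *
        ∫⁻ x, ntMaxOn Ω (collar Ω ε) κ u x ^ p ∂(μH[(n : ℝ) - 1]).restrict (frontier Ω) := by
  set F := frontier Ω
  set d : Euc n → ℝ := fun y => infDist y F
  set c := C₀⁻¹ * (κ / 2) ^ (n - 1)
  have hc : 0 < c := by have := one_pos.trans hAR.1; positivity
  have hdiamF : 0 < Metric.ediam F :=
    (ENNReal.mul_pos_iff.1 ((ENNReal.ofReal_pos.2 (by positivity)).trans_le hdiam)).2
  have hF : F.Nonempty := (Metric.ediam_pos_iff.1 hdiamF).nonempty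
  have := isLocallyFiniteMeasure_restrict_of_ahlforsRegularWith hAR hdiamF
  set T : Set (Euc n × Euc n) := {q | dist q.2 q.1 < (1 + κ / 2) * d q.1}
  have hT : MeasurableSet T :=
    (isOpen_lt (continuous_snd.dist continuous_fst)
      (continuous_const.mul ((continuous_infDist_pt F).comp continuous_fst))).measurableSet
  have hw : Measurable fun y => (ENNReal.ofReal (c * d y ^ (n - 1)))⁻¹ :=
    (continuous_const.mul ((continuous_infDist_pt F).pow _)).measurable.ennreal_ofReal.inv
  have hcollar : MeasurableSet (collar Ω ε) := (isOpen_collar hΩ ε).measurableSet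
  refine lintegral_le_mul_lintegral_of_le_setLIntegral hT hw
    ((lowerSemicontinuous_ntMaxOn Ω _ κ u).measurable.pow_const p) ?_ fun x => ?_
  · rw [ae_restrict_iff' hcollar]
    filter_upwards [ae_ofReal_mul_rpow_le_setLIntegral_ntMaxOn hΩ (isOpen_collar hΩ ε) hAR hF hκ
      hp u] with y hy hyc
    have hdy : 0 < d y := infDist_frontier_pos hΩ hF hyc.1
    have hr : ENNReal.ofReal (κ / 2 * d y) < 2 * Metric.ediam F :=
      ((ENNReal.ofReal_lt_ofReal_iff (by positivity)).2 (by gcongr; exact hyc.2)).trans_le hdiam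
    have := hy ⟨hyc.1, hyc⟩ hr
    rw [mul_pow, ← mul_assoc] at this
    rw [← ENNReal.div_eq_inv_mul, ENNReal.le_div_iff_mul_le
      (Or.inl (ENNReal.ofReal_pos.2 (by positivity)).ne') (Or.inl ENNReal.ofReal_ne_top), mul_comm]
    exact this
  · have hTx : MeasurableSet {y | (y, x) ∈ T} := measurable_prodMk_right hT
    rw [Measure.restrict_restrict hTx]
    have hE : Module.finrank ℝ (Euc n) = n - 1 + 1 := by
      rw [finrank_euclideanSpace_fin]
      omega
    have := setLIntegral_cone_inv_pow_le volume hE d hc (by positivity : 0 < 1 + κ / 2) hε x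
    rw [Nat.sub_add_cancel hn] at this
    refine (lintegral_mono_set fun y hy => ?_).trans this
    exact ⟨infDist_frontier_pos hΩ hF hy.2.1, hy.2.2, hy.1⟩

end Collar

/-- the `L^p` norm of a measurable function over the collar `O_ε` is
controlled by `ε^{1/p}` times the `L^p(∂Ω,σ)` norm of its truncated nontangential
maximal function, uniformly for `ε < diam(∂Ω)/(n(2+√n)(3+2κ))`, with a constant
depending only on `n`, `κ`, `p` and the Ahlfors regularity constant. -/
theorem statement13 (n : ℕ) (hn : 1 ≤ n) (C₀ : ℝ) (hC₀ : 1 < C₀)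
    (p κ : ℝ) (hp : 0 < p) (hκ : 0 < κ) :
    ∃ C : ℝ, 0 < C ∧
      ∀ Ω : Set (Euc n), IsOpen Ω → Ω.Nonempty → Ω ≠ univ →
        AhlforsRegularWith n (frontier Ω) C₀ →
        ∀ ε : ℝ, 0 < ε →
          ENNReal.ofReal (ε * (n * (2 + Real.sqrt n) * (3 + 2 * κ))) <
            EMetric.diam (frontier Ω) →
          ∀ u : Euc n → ℂ, Measurable u →
            (∫⁻ y in collar Ω ε, (‖u y‖₊ : ℝ≥0∞) ^ p ∂volume) ^ (1 / p) ≤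
              ENNReal.ofReal C * ENNReal.ofReal ε ^ (1 / p) *
                (∫⁻ x, (ntMaxOn Ω (collar Ω ε) κ u x) ^ p
                  ∂((μH[(n : ℝ) - 1]).restrict (frontier Ω))) ^ (1 / p) := by
  set B : ℝ≥0∞ := 2 * ENNReal.ofReal (2 ^ (n - 1) * (1 + κ / 2) ^ n / (C₀⁻¹ * (κ / 2) ^ (n - 1))) *
    volume (ball (0 : Euc n) 1)
  have hB : B ≠ 0 := mul_ne_zero (mul_ne_zero two_ne_zero
    (ENNReal.ofReal_pos.2 (by have := one_pos.trans hC₀; positivity)).ne')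
    (measure_ball_pos volume 0 one_pos).ne'
  have hB' : B ≠ ⊤ :=
    ENNReal.mul_ne_top (ENNReal.mul_ne_top ENNReal.ofNat_ne_top ENNReal.ofReal_ne_top)
      measure_ball_lt_top.ne
  have hp' : 0 ≤ 1 / p := by positivity
  refine ⟨B.toReal ^ (1 / p), Real.rpow_pos_of_pos (ENNReal.toReal_pos hB hB') _, ?_⟩
  intro Ω hΩ _ _ hAR ε hε hdiam u _
  have hdiam' : ENNReal.ofReal (κ / 2 * ε) ≤ 2 * Metric.ediam (frontier Ω) := by
    have hn' : (1 : ℝ) ≤ n := Nat.one_le_cast.2 hn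
    have h2 : (2 : ℝ) ≤ n * (2 + Real.sqrt n) := by nlinarith [Real.sqrt_nonneg (n : ℝ)]
    have : κ / 2 ≤ n * (2 + Real.sqrt n) * (3 + 2 * κ) := by nlinarith
    calc ENNReal.ofReal (κ / 2 * ε) ≤ ENNReal.ofReal (ε * (n * (2 + Real.sqrt n) * (3 + 2 * κ))) :=
          ENNReal.ofReal_le_ofReal (by nlinarith)
      _ ≤ Metric.ediam (frontier Ω) := hdiam.le
      _ ≤ 2 * Metric.ediam (frontier Ω) := le_mul_of_one_le_left zero_le one_le_two
  calc _ ≤ (B * ENNReal.ofReal ε * ∫⁻ x, ntMaxOn Ω (collar Ω ε) κ u x ^ p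
          ∂(μH[(n : ℝ) - 1]).restrict (frontier Ω)) ^ (1 / p) :=
        ENNReal.rpow_le_rpow (lintegral_collar_rpow_le hn hΩ hAR hκ hp.le hε hdiam' u) hp'
    _ = _ := by
        rw [ENNReal.mul_rpow_of_nonneg _ _ hp', ENNReal.mul_rpow_of_nonneg _ _ hp',
          ← ENNReal.ofReal_rpow_of_nonneg ENNReal.toReal_nonneg hp', ENNReal.ofReal_toReal hB']
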